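/- The series f satisfies the q-difference equation q (1 − x) f(x) = (q + c + a x² q² + d x² q²) f(xq) − (1 + xq)(c − a d x² q³) f(xq²) in R[[x]], together with f(0) = 1 and f'(0) = (1 − q)^{−1} (i.e. the coefficient of x in f is (1 − q)^{−1}). -/

import Mathlib

open Finset PowerSeries

namespace Primc

/-- Colours: `0 = a`, `1 = b`, `2 = c`, `3 = d`. -/
abbrev Colour := Fin 4

/-- A coloured part `k_z`: an underlying integer `k` together with its colour `z`. -/
abbrev CPart := ℕ × Colour

/-- The matrix `D` of minimal differences, with rows and columns indexed by the colours
`a, b, c, d` in this order. -/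
def Dmat : Colour → Colour → ℕ := ![![2,1,2,2], ![1,0,1,1], ![0,1,0,2], ![0,1,0,2]]

/-- The position of a coloured part in the total order
`1_a < 1_b < 1_c < 1_d < 2_a < 2_b < 2_c < 2_d < ⋯`. -/
def pos (p : CPart) : ℕ := 4 * p.1 + (p.2 : ℕ)

/-- A Primc partition: a finite sequence of coloured positive integers, non-increasing in the
above total order, in which consecutive parts `λ_i, λ_{i+1}` of colours `x, y` satisfy
`λ_i − λ_{i+1} ≥ D(x,y)`. -/
def IsPrimc (l : List CPart) : Prop :=
  (∀ p ∈ l, 1 ≤ p.1) ∧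
  l.Chain' fun p r => pos r ≤ pos p ∧ r.1 + Dmat p.2 r.2 ≤ p.1

/-- The weight of a coloured partition: the sum of the underlying integers of its parts. -/
def wt (l : List CPart) : ℕ := (l.map Prod.fst).sum

/-- The number of parts of colour `z`. -/
def nc (l : List CPart) (z : Colour) : ℕ := l.countP fun p => p.2 == z

/-- `R₀ = ℤ[a,c,d]`, with `a = X 0`, `c = X 1`, `d = X 2`. -/
abbrev R0 := MvPolynomial (Fin 3) ℤ

/-- `R = ℤ[a,c,d][[q]]`. -/
abbrev R := PowerSeries R0

/-- The variable `q`. -/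
noncomputable def qq : R := PowerSeries.X

/-- The variable `a`. -/
noncomputable def av : R0 := MvPolynomial.X 0

/-- The variable `c`. -/
noncomputable def cv : R0 := MvPolynomial.X 1

/-- The variable `d`. -/
noncomputable def dv : R0 := MvPolynomial.X 2

/-- The monomial `a^{#(a-parts)} c^{#(c-parts)} d^{#(d-parts)}` attached to a coloured
partition. -/
noncomputable def mono (l : List CPart) : R0 := av ^ nc l 0 * cv ^ nc l 2 * dv ^ nc l 3

/-- The infinite product `∏_{j ≥ 0} f j`, defined coefficientwise: the coefficient of `qⁿ` is
the corresponding coefficient of the partial product `∏_{j ≤ n} f j`.  This agrees with the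
usual (coefficientwise convergent) infinite product whenever the factor `f j` is `≡ 1`
modulo `q^{j+1}`, as is the case for all products appearing here. -/
noncomputable def iprod (f : ℕ → R) : R :=
  PowerSeries.mk fun n => PowerSeries.coeff (R := R0) n (∏ j ∈ Finset.range (n + 1), f j)

/-- The largest part of a Primc partition (its parts being written in non-increasing order),
with the convention that the empty partition has largest part `0_b`. -/
def top (l : List CPart) : CPart := l.headD (0, 1)

/-- `G_{k_x} ∈ R`: the sum of `q^{|λ|} a^{#(a-parts)} c^{#(c-parts)} d^{#(d-parts)}` over all
Primc partitions `λ` whose largest part is at most `k_x` in the colour order. -/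
noncomputable def G (k : ℕ) (x : Colour) : R :=
  PowerSeries.mk fun n =>
    ∑ᶠ lam : {l : List CPart // IsPrimc l ∧ wt l = n ∧ pos (top l) ≤ pos (k, x)}, mono lam.1

/-- `E_{k_x} ∈ R`: the sum of `q^{|λ|} a^{#(a-parts)} c^{#(c-parts)} d^{#(d-parts)}` over all
Primc partitions `λ` whose largest part is exactly `k_x` (so `E_{0_b} = 1`, the empty
partition having largest part `0_b` by convention). -/
noncomputable def E (k : ℕ) (x : Colour) : R :=
  PowerSeries.mk fun n =>
    ∑ᶠ lam : {l : List CPart // IsPrimc l ∧ wt l = n ∧ top l = (k, x)}, mono lam.1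

/-- `H_k = G_{k_d} (1 − q^{k+1})⁻¹ ∈ R` for `k ≥ 0`. -/
noncomputable def H (k : ℕ) : R := G k 3 * Ring.inverse (1 - qq ^ (k + 1))

/-- `f(x) = ∑_{k ≥ 0} H_{k−1} x^k ∈ R[[x]]`, with the convention `H_{−1} = 1`. -/
noncomputable def fser : PowerSeries R :=
  PowerSeries.mk fun k => if k = 0 then 1 else H (k - 1)

/-! Sort Primc partitions by the position `pos r` of their largest part `r`. Deleting a largest
part `k_z` (`k ≥ 1`) leaves a Primc partition whose largest part may precede `k_z`, and reading
off `D` this condition is a union of intervals of positions. This gives linear relations between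
the series `topBelow m` and `topAt m` of partitions whose largest part lies below, resp. at,
position `m`; the deleted part contributes `q^k`. Collected along each colour class into series
in `x`, the factor `q^k` becomes the substitution `x ↦ xq`, and the relations become two
functional equations: one for `f`, and one for the series `T` of partitions that may follow a
part of colour `c` or `d`. Eliminating `T` between them and their images under `x ↦ xq` gives
the `q`-difference equation. -/

lemma _root_.PowerSeries.rescale_C {S : Type*} [CommSemiring S] (a r : S) :
    rescale a (C r) = C r := by
  ext n
  rw [coeff_rescale, coeff_C]
  split_ifs with h <;> simp [h]

lemma qDifference_of_system {S : Type*} [CommRing S] {q a c d : S} {F T : S⟦X⟧}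
    (hF : F - rescale q F = X * (F + C (a * q) * X * rescale q F + C (c + d) * rescale q T))
    (hT : T = X * F + (1 + X) * (C (a * q) * X * rescale q F + C c * rescale q T)) :
    C q * (1 - X) * F =
      (C q + C c + C a * X ^ 2 * C (q ^ 2) + C d * X ^ 2 * C (q ^ 2)) * rescale q F -
        (1 + X * C q) * (C c - C a * C d * X ^ 2 * C (q ^ 3)) * rescale (q ^ 2) F := by
  have hF₁ := congrArg (rescale q) hF
  have hT₁ := congrArg (rescale q) hT
  simp only [map_sub, map_add, map_mul, rescale_X, rescale_C, map_one, rescale_rescale]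
    at hF₁ hT₁
  simp only [map_add, map_mul, pow_two, pow_three] at *
  -- `q • hF` and `c (1 + qX) • hF₁` express `qX(c+d) T(qx)` and `qX(c+d) T(q²x)` through
  -- `F`; substituting both into `qX(c+d) • hT₁` leaves an identity in `F` alone.
  linear_combination C q * hF + C q * X * (C c + C d) * hT₁ - C c * (1 + C q * X) * hF₁

def CanPrecede (p r : CPart) : Prop := pos r ≤ pos p ∧ r.1 + Dmat p.2 r.2 ≤ p.1

lemma isPrimc_iff {l : List CPart} :
    IsPrimc l ↔ (∀ p ∈ l, 1 ≤ p.1) ∧ l.IsChain CanPrecede :=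
  Iff.rfl

/-- The convention `top [] = 0_b` makes this hold for `l = []` as well, because `D(x, b) ≤ 1`. -/
lemma isPrimc_cons_iff {p : CPart} {l : List CPart} :
    IsPrimc (p :: l) ↔ 1 ≤ p.1 ∧ IsPrimc l ∧ CanPrecede p (top l) := by
  rcases l with _ | ⟨r, l⟩
  · obtain ⟨k, x⟩ := p
    suffices 1 ≤ k → Dmat x 1 ≤ k by
      simpa [isPrimc_iff, CanPrecede, top, pos, List.isChain_singleton] using
        fun hk => ⟨by omega, this hk⟩
    fin_cases x <;> simp [Dmat]
  · simp only [isPrimc_iff, List.forall_mem_cons, List.isChain_cons_cons, top, List.headD_cons]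
    tauto

lemma isPrimc_nil : IsPrimc [] := isPrimc_iff.2 ⟨by simp, List.isChain_nil⟩

lemma top_eq_or_one_le {l : List CPart} (hl : IsPrimc l) : top l = (0, 1) ∨ 1 ≤ (top l).1 := by
  rcases l with _ | ⟨p, l⟩
  · exact Or.inl rfl
  · exact Or.inr (hl.1 p List.mem_cons_self)

lemma length_le_wt {l : List CPart} (hl : IsPrimc l) : l.length ≤ wt l := by
  simpa [wt] using List.length_le_sum_of_one_le (l.map Prod.fst) (by simpa using hl.1)

lemma finite_setOf_isPrimc_wt_eq (n : ℕ) : {l | IsPrimc l ∧ wt l = n}.Finite := by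
  let c : Fin (n + 1) × Colour → CPart := fun p => (p.1, p.2)
  refine ((List.finite_length_le _ n).image (List.map c)).subset ?_
  rintro l ⟨hl, rfl⟩
  have hbound : ∀ p ∈ l, p.1 < wt l + 1 := fun p hp =>
    Nat.lt_succ_of_le (List.single_le_sum (fun _ _ => Nat.zero_le _) _ (List.mem_map_of_mem hp))
  refine ⟨l.pmap (fun p hp => (⟨p.1, hp⟩, p.2)) hbound, by simpa using length_le_wt hl, ?_⟩
  simp [c, List.map_pmap]

noncomputable def colourVar : Colour → R0 := ![av, 1, cv, dv]

lemma mono_cons (k : ℕ) (x : Colour) (l : List CPart) :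
    mono ((k, x) :: l) = colourVar x * mono l := by
  fin_cases x <;> simp [mono, nc, colourVar] <;> ring

lemma wt_cons (p : CPart) (l : List CPart) : wt (p :: l) = p.1 + wt l := by
  simp [wt]

noncomputable def topSeries (P : CPart → Prop) : R :=
  PowerSeries.mk fun n => ∑ᶠ l ∈ {l | IsPrimc l ∧ wt l = n ∧ P (top l)}, mono l

lemma coeff_topSeries (P : CPart → Prop) (n : ℕ) :
    coeff n (topSeries P) = ∑ᶠ l ∈ {l | IsPrimc l ∧ wt l = n ∧ P (top l)}, mono l :=
  coeff_mk _ _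

lemma G_eq_topSeries (k : ℕ) (x : Colour) : G k x = topSeries (fun r => pos r ≤ pos (k, x)) :=
  PowerSeries.ext fun n => by
    simpa [G, coeff_topSeries] using finsum_subtype_eq_finsum_cond
      (fun l => IsPrimc l ∧ wt l = n ∧ pos (top l) ≤ pos (k, x)) (f := mono)

lemma topSeries_congr {P Q : CPart → Prop}
    (h : ∀ r, r = (0, 1) ∨ 1 ≤ r.1 → (P r ↔ Q r)) : topSeries P = topSeries Q := by
  refine PowerSeries.ext fun n => ?_
  rw [coeff_topSeries, coeff_topSeries, Set.ext fun l =>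
    and_congr_right fun hl => and_congr_right fun _ => h _ (top_eq_or_one_le hl)]

lemma topSeries_or {P Q : CPart → Prop} (h : ∀ r, P r → ¬ Q r) :
    topSeries (fun r => P r ∨ Q r) = topSeries P + topSeries Q := by
  refine PowerSeries.ext fun n => ?_
  simp only [map_add, coeff_topSeries, and_or_left, Set.ofPred_or]
  refine finsum_mem_union ?_ ((finite_setOf_isPrimc_wt_eq n).subset ?_)
    ((finite_setOf_isPrimc_wt_eq n).subset ?_)
  · exact Set.disjoint_left.2 fun l hP hQ => h _ hP.2.2 hQ.2.2
  all_goals exact fun l hl => ⟨hl.1, hl.2.1⟩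

lemma topSeries_false : topSeries (fun _ => False) = 0 :=
  PowerSeries.ext fun n => by simp [coeff_topSeries]

lemma topSeries_eq_zero_one : topSeries (· = (0, 1)) = 1 := by
  refine PowerSeries.ext fun n => ?_
  have hnil : {l | IsPrimc l ∧ wt l = n ∧ top l = (0, 1)} = if n = 0 then {[]} else ∅ := by
    ext (_ | ⟨p, l⟩)
    · split_ifs <;> simp_all [isPrimc_nil, wt, top, eq_comm]
    · have : ¬ (IsPrimc (p :: l) ∧ p = (0, 1)) := fun ⟨hl, hp⟩ => by
        simpa [hp] using hl.1 p List.mem_cons_self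
      split_ifs <;> simp [top] <;> tauto
  rw [coeff_topSeries, coeff_one, hnil]
  split_ifs <;> simp [mono, nc]

lemma setOf_top_eq_image_cons {k n : ℕ} (hk : 1 ≤ k) (hkn : k ≤ n) (x : Colour) :
    {l | IsPrimc l ∧ wt l = n ∧ top l = (k, x)} =
      List.cons (k, x) '' {l | IsPrimc l ∧ wt l = n - k ∧ CanPrecede (k, x) (top l)} := by
  ext (_ | ⟨p, l⟩)
  · simp [top, Prod.ext_iff]
    omega
  · simp only [Set.mem_ofPred_eq, Set.mem_image, List.cons.injEq, top, List.headD_cons,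
      isPrimc_cons_iff, wt_cons]
    constructor
    · rintro ⟨⟨h1, hl, hc⟩, hw, rfl⟩
      exact ⟨l, ⟨hl, by omega, hc⟩, rfl, rfl⟩
    · rintro ⟨l, ⟨hl, hw, hc⟩, rfl, rfl⟩
      exact ⟨⟨hk, hl, hc⟩, by omega, rfl⟩

lemma topSeries_eq_cons {k : ℕ} (hk : 1 ≤ k) (x : Colour) :
    topSeries (· = (k, x)) = C (colourVar x) * qq ^ k * topSeries (CanPrecede (k, x)) := by
  refine PowerSeries.ext fun n => ?_
  rw [mul_assoc, coeff_C_mul, qq, coeff_X_pow_mul', coeff_topSeries, coeff_topSeries]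
  split_ifs with hkn
  · rw [setOf_top_eq_image_cons hk hkn, finsum_mem_image List.cons_injective.injOn,
      mul_finsum_mem]
    simp only [mono_cons]
  · rw [mul_zero]
    refine finsum_mem_of_eqOn_zero fun l ⟨_, hw, htop⟩ => absurd ?_ hkn
    rcases l with _ | ⟨p, l⟩
    · simp [top, Prod.ext_iff] at htop
      omega
    · simp only [top, List.headD_cons] at htop
      simp [← hw, wt_cons, htop]

noncomputable def topBelow (m : ℕ) : R := topSeries (pos · < m)

noncomputable def topAt (m : ℕ) : R := topSeries (pos · = m)

lemma topBelow_succ (m : ℕ) : topBelow (m + 1) = topBelow m + topAt m := by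
  rw [topBelow, topBelow, topAt, ← topSeries_or fun r h1 h2 => by omega]
  exact topSeries_congr fun r _ => Nat.lt_succ_iff_lt_or_eq

lemma topBelow_zero : topBelow 0 = 0 := by
  rw [topBelow, ← topSeries_false]
  exact topSeries_congr fun r _ => by simp

lemma topAt_one : topAt 1 = 1 := by
  rw [topAt, ← topSeries_eq_zero_one]
  refine topSeries_congr fun ⟨t, y⟩ hr => ?_
  fin_cases y <;> simp [pos, Prod.ext_iff] at hr ⊢

lemma topAt_eq_zero_of_lt_four {m : ℕ} (hm : m < 4) (h1 : m ≠ 1) : topAt m = 0 := by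
  rw [topAt, ← topSeries_false]
  refine topSeries_congr fun ⟨t, y⟩ hr => ?_
  fin_cases y <;> simp [pos, Prod.ext_iff] at hr ⊢ <;> omega

lemma G_eq_topBelow (k : ℕ) : G k 3 = topBelow (4 * k + 4) := by
  rw [G_eq_topSeries, topBelow]
  exact topSeries_congr fun r _ => by simp [pos]; omega

lemma topAt_eq_colourVar_mul {m n : ℕ} {z : Colour} (hm : m = 4 * n + 4 + z) :
    topAt m = C (colourVar z) * qq ^ (n + 1) * topSeries (CanPrecede (n + 1, z)) := by
  rw [topAt, ← topSeries_eq_cons (by omega), hm]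
  refine topSeries_congr fun ⟨t, y⟩ _ => ?_
  simp only [pos, Prod.ext_iff, Fin.ext_iff]
  omega

lemma canPrecede_succ_a_iff (n : ℕ) (r : CPart) :
    CanPrecede (n + 1, 0) r ↔ pos r < 4 * n ∨ pos r = 4 * n + 1 := by
  obtain ⟨t, y⟩ := r
  fin_cases y <;> simp [CanPrecede, pos, Dmat] <;> omega

lemma canPrecede_succ_b_iff (n : ℕ) (r : CPart) :
    CanPrecede (n + 1, 1) r ↔ pos r < 4 * n + 4 ∨ pos r = 4 * n + 5 := by
  obtain ⟨t, y⟩ := r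
  fin_cases y <;> simp [CanPrecede, pos, Dmat] <;> omega

lemma canPrecede_succ_iff_of_two_le (n : ℕ) {z : Colour} (hz : 2 ≤ (z : ℕ)) (r : CPart) :
    CanPrecede (n + 1, z) r ↔ pos r < 4 * n + 3 ∨ pos r = 4 * n + 4 ∨ pos r = 4 * n + 6 := by
  obtain ⟨t, y⟩ := r
  fin_cases z <;> fin_cases y <;> simp_all [CanPrecede, pos, Dmat] <;> omega

lemma topAt_succ_a (n : ℕ) :
    topAt (4 * n + 4) = C av * qq ^ (n + 1) * (topBelow (4 * n) + topAt (4 * n + 1)) := by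
  rw [topAt_eq_colourVar_mul (m := 4 * n + 4) (z := 0) rfl, topBelow, topAt,
    ← topSeries_or fun r h1 h2 => by omega]
  exact congrArg _ (topSeries_congr fun r _ => canPrecede_succ_a_iff n r)

lemma topAt_succ_b (n : ℕ) :
    topAt (4 * n + 5) = qq ^ (n + 1) * (topBelow (4 * n + 4) + topAt (4 * n + 5)) := by
  nth_rw 1 [topAt_eq_colourVar_mul (m := 4 * n + 5) (z := 1) rfl]
  rw [show colourVar 1 = 1 from rfl, map_one, one_mul, topBelow, topAt,
    ← topSeries_or fun r h1 h2 => by omega]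
  exact congrArg _ (topSeries_congr fun r _ => canPrecede_succ_b_iff n r)

noncomputable def cdTail (n : ℕ) : R :=
  topBelow (4 * n + 3) + topAt (4 * n + 4) + topAt (4 * n + 6)

lemma topAt_succ_of_two_le {m n : ℕ} {z : Colour} (hz : 2 ≤ (z : ℕ))
    (hm : m = 4 * n + 4 + z) :
    topAt m = C (colourVar z) * qq ^ (n + 1) * cdTail n := by
  rw [topAt_eq_colourVar_mul hm, cdTail, topBelow, topAt, topAt,
    ← topSeries_or fun r h1 h2 => by omega, ← topSeries_or fun r h1 h2 => by omega]
  exact congrArg _ (topSeries_congr fun r _ =>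
    (canPrecede_succ_iff_of_two_le n hz r).trans or_assoc.symm)

noncomputable def cdSeries : R⟦X⟧ := X * PowerSeries.mk cdTail

noncomputable def colourSeries (u : ℕ → R) (z : ℕ) : R⟦X⟧ :=
  PowerSeries.mk fun n => u (4 * n + z)

lemma coeff_colourSeries (u : ℕ → R) (z n : ℕ) : coeff n (colourSeries u z) = u (4 * n + z) :=
  coeff_mk _ _

lemma coeff_succ_colourSeries (u : ℕ → R) (z n : ℕ) :
    coeff (n + 1) (colourSeries u z) = u (4 * n + (4 + z)) := by
  rw [coeff_colourSeries, mul_add, mul_one, add_assoc]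

lemma isUnit_one_sub_qq_pow (k : ℕ) : IsUnit (1 - qq ^ (k + 1)) := by
  simp [isUnit_iff_constantCoeff, qq]

/-- `H_k` generates the partitions with largest part at most `(k+1)_b` but not `(k+1)_a`: the
factor `(1 - q^{k+1})⁻¹` accounts for the repeatable part `(k+1)_b`. -/
lemma fser_eq : fser = colourSeries topBelow 0 + colourSeries topAt 1 := by
  refine PowerSeries.ext fun n => ?_
  rw [map_add]
  rcases n with _ | k
  · simp [fser, coeff_colourSeries, topBelow_zero, topAt_one]
  · simp only [fser, coeff_mk, coeff_succ_colourSeries, Nat.reduceAdd, add_tsub_cancel_right,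
      Nat.add_one_ne_zero, if_false, H]
    refine ((Ring.eq_mul_inverse_iff_mul_eq _ _ _ (isUnit_one_sub_qq_pow k)).2 ?_).symm
    rw [G_eq_topBelow]
    linear_combination topAt_succ_b k

lemma colourSeries_topAt_one :
    colourSeries topAt 1 = rescale qq (colourSeries topBelow 0 + colourSeries topAt 1) := by
  refine PowerSeries.ext fun n => ?_
  rcases n with _ | n
  · simp only [coeff_rescale, map_add, coeff_colourSeries]
    simp [topBelow_zero, topAt_one]
  · simp only [coeff_rescale, map_add, coeff_succ_colourSeries, Nat.reduceAdd]
    linear_combination topAt_succ_b n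

lemma colourSeries_topAt_zero :
    colourSeries topAt 0 =
      C (C av * qq) * X * rescale qq (colourSeries topBelow 0 + colourSeries topAt 1) := by
  refine PowerSeries.ext fun n => ?_
  rcases n with _ | n
  · simp [coeff_colourSeries, topAt_eq_zero_of_lt_four]
  · rw [coeff_succ_colourSeries, add_zero, topAt_succ_a]
    simp only [mul_assoc, coeff_C_mul, coeff_succ_X_mul, coeff_rescale, map_add,
      coeff_colourSeries, add_zero]
    ring

lemma colourSeries_topAt_of_two_le {z : Colour} (hz : 2 ≤ (z : ℕ)) :
    colourSeries topAt z = C (C (colourVar z)) * rescale qq cdSeries := by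
  refine PowerSeries.ext fun n => ?_
  rcases n with _ | n
  · have hz1 : (z : ℕ) ≠ 1 := by omega
    simp [cdSeries, coeff_colourSeries, topAt_eq_zero_of_lt_four z.isLt hz1]
  · rw [coeff_succ_colourSeries, topAt_succ_of_two_le hz (add_assoc _ _ _).symm]
    simp only [cdSeries, coeff_C_mul, coeff_rescale, coeff_succ_X_mul, coeff_mk]
    ring

lemma colourSeries_topBelow_zero :
    colourSeries topBelow 0 = X * (colourSeries topBelow 0 + colourSeries topAt 0 +
      colourSeries topAt 1 + colourSeries topAt 2 + colourSeries topAt 3) := by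
  refine PowerSeries.ext fun n => ?_
  rcases n with _ | n
  · simp [coeff_colourSeries, topBelow_zero]
  · rw [coeff_succ_colourSeries, coeff_succ_X_mul]
    simp only [map_add, coeff_colourSeries, add_zero, topBelow_succ]

lemma cdSeries_eq_colourSeries :
    cdSeries = X * (colourSeries topBelow 0 + colourSeries topAt 0 + colourSeries topAt 1 +
      colourSeries topAt 2) + colourSeries topAt 0 + colourSeries topAt 2 := by
  refine PowerSeries.ext fun n => ?_
  rcases n with _ | n
  · simp only [cdSeries, map_add, coeff_zero_X_mul, coeff_colourSeries]
    simp [topAt_eq_zero_of_lt_four]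
  · simp only [cdSeries, coeff_succ_X_mul, coeff_mk, map_add, coeff_succ_colourSeries,
      Nat.reduceAdd]
    simp only [coeff_colourSeries, add_zero, cdTail, topBelow_succ]

lemma fser_sub_rescale :
    fser - rescale qq fser = X * (fser + C (C av * qq) * X * rescale qq fser +
      C (C cv + C dv) * rescale qq cdSeries) := by
  have hc : colourSeries topAt 2 = C (C cv) * _ := colourSeries_topAt_of_two_le (z := 2) le_rfl
  have hd : colourSeries topAt 3 = C (C dv) * _ :=
    colourSeries_topAt_of_two_le (z := 3) (by decide)
  rw [fser_eq, ← colourSeries_topAt_zero, ← colourSeries_topAt_one, map_add]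
  linear_combination colourSeries_topBelow_zero + X * hc + X * hd

lemma cdSeries_eq :
    cdSeries = X * fser +
      (1 + X) * (C (C av * qq) * X * rescale qq fser + C (C cv) * rescale qq cdSeries) := by
  have hc : colourSeries topAt 2 = C (C cv) * _ := colourSeries_topAt_of_two_le (z := 2) le_rfl
  rw [fser_eq, ← colourSeries_topAt_zero]
  linear_combination cdSeries_eq_colourSeries + (1 + X) * hc

lemma G_zero_three : G 0 3 = 1 := by
  rw [G_eq_topSeries, ← topSeries_eq_zero_one]
  refine topSeries_congr fun ⟨t, y⟩ hr => ?_
  fin_cases y <;> simp [pos, Prod.ext_iff] at hr ⊢ <;> omega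

/-- The `q`-difference equation (2.10) (cleared of denominators): in `R[[x]]`,
`q(1−x) f(x) = (q + c + a x² q² + d x² q²) f(xq) − (1+xq)(c − a d x² q³) f(xq²)`,
together with `f(0) = 1` and `f'(0) = (1−q)⁻¹`.  Here `F(xq^j)` is obtained from `F` by the
rescaling `x ↦ q^j x`. -/
theorem statement15 :
    PowerSeries.C (R := R) qq * (1 - PowerSeries.X) * fser =
      (PowerSeries.C (R := R) qq + PowerSeries.C (R := R) (PowerSeries.C (R := R0) cv) +
          PowerSeries.C (R := R) (PowerSeries.C (R := R0) av) * PowerSeries.X ^ 2 * PowerSeries.C (R := R) (qq ^ 2) +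
          PowerSeries.C (R := R) (PowerSeries.C (R := R0) dv) * PowerSeries.X ^ 2 * PowerSeries.C (R := R) (qq ^ 2)) *
        PowerSeries.rescale qq fser -
      (1 + PowerSeries.X * PowerSeries.C (R := R) qq) *
        (PowerSeries.C (R := R) (PowerSeries.C (R := R0) cv) -
            PowerSeries.C (R := R) (PowerSeries.C (R := R0) av) * PowerSeries.C (R := R) (PowerSeries.C (R := R0) dv) *
              PowerSeries.X ^ 2 * PowerSeries.C (R := R) (qq ^ 3)) *
        PowerSeries.rescale (qq ^ 2) fser ∧
    PowerSeries.coeff (R := R) 0 fser = 1 ∧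
    PowerSeries.coeff (R := R) 1 fser = Ring.inverse (1 - qq) := by
  refine ⟨qDifference_of_system fser_sub_rescale cdSeries_eq, by simp [fser], ?_⟩
  simp [fser, H, G_zero_three]

end Primc
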